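/- Let u1 < u2 < u3 be the three real roots of u³ - u² - 2u + 1 = 0. Let S be the 6×6 real matrix whose rows are: r1 = (√((5-√21)/42), 1/√7, 1/√3, 1/√7, 1/√7, √((5+√21)/42)); r2 = (1/√7, u3/√7, 0, u2/√7, u1/√7, -1/√7); r3 = (1/√3, 0, -1/√3, 0, 0, 1/√3); r4 = (1/√7, u2/√7, 0, u1/√7, u3/√7, -1/√7); r5 = (1/√7, u1/√7, 0, u3/√7, u2/√7, -1/√7); r6 = (√((5+√21)/42), -1/√7, 1/√3, -1/√7, -1/√7, √((5-√21)/42)). Let T = diag(-i, e^{iπ/14}, e^{5iπ/6}, e^{9iπ/14}, e^{-3iπ/14}, -i). Let M be the 6×6 integer matrix with nonzero entries M_{1,1}=M_{1,6}=M_{6,1}=M_{6,6}=1 and M_{3,3}=2. Then M·S = S·M and M·T = T·M. -/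
import Mathlib


open Matrix

/-- `e^{iπa}` for `a : ℝ`. -/
noncomputable def ee (a : ℝ) : ℂ := Complex.exp (Complex.I * a * Real.pi)

/-- The Kac–Peterson modular generator `S` of G2 at level 3, expressed in terms of the
three real roots `u1 < u2 < u3` of `u³ - u² - 2u + 1`. -/
noncomputable def S (u1 u2 u3 : ℝ) : Matrix (Fin 6) (Fin 6) ℂ :=
  !![(Real.sqrt ((5 - Real.sqrt 21) / 42) : ℝ), (1/Real.sqrt 7 : ℝ), (1/Real.sqrt 3 : ℝ),
       (1/Real.sqrt 7 : ℝ), (1/Real.sqrt 7 : ℝ), (Real.sqrt ((5 + Real.sqrt 21) / 42) : ℝ);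
     (1/Real.sqrt 7 : ℝ), (u3/Real.sqrt 7 : ℝ), 0, (u2/Real.sqrt 7 : ℝ),
       (u1/Real.sqrt 7 : ℝ), (-(1/Real.sqrt 7) : ℝ);
     (1/Real.sqrt 3 : ℝ), 0, (-(1/Real.sqrt 3) : ℝ), 0, 0, (1/Real.sqrt 3 : ℝ);
     (1/Real.sqrt 7 : ℝ), (u2/Real.sqrt 7 : ℝ), 0, (u1/Real.sqrt 7 : ℝ),
       (u3/Real.sqrt 7 : ℝ), (-(1/Real.sqrt 7) : ℝ);
     (1/Real.sqrt 7 : ℝ), (u1/Real.sqrt 7 : ℝ), 0, (u3/Real.sqrt 7 : ℝ),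
       (u2/Real.sqrt 7 : ℝ), (-(1/Real.sqrt 7) : ℝ);
     (Real.sqrt ((5 + Real.sqrt 21) / 42) : ℝ), (-(1/Real.sqrt 7) : ℝ), (1/Real.sqrt 3 : ℝ),
       (-(1/Real.sqrt 7) : ℝ), (-(1/Real.sqrt 7) : ℝ), (Real.sqrt ((5 - Real.sqrt 21) / 42) : ℝ)]

/-- The Kac–Peterson modular generator `T` of G2 at level 3. -/
noncomputable def T : Matrix (Fin 6) (Fin 6) ℂ :=
  Matrix.diagonal ![-Complex.I, ee (1/14), ee (5/6), ee (9/14), ee (-3/14), -Complex.I]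

/-- The modular invariant matrix of the exceptional partition function of G2 at level 3,
arising from the conformal embedding G2 ⊂ E6. -/
noncomputable def M : Matrix (Fin 6) (Fin 6) ℂ :=
  !![1, 0, 0, 0, 0, 1;
     0, 0, 0, 0, 0, 0;
     0, 0, 2, 0, 0, 0;
     0, 0, 0, 0, 0, 0;
     0, 0, 0, 0, 0, 0;
     1, 0, 0, 0, 0, 1]


section AuxVec
variable {α : Type*} (a b c d e f : α)
lemma c6_1 (x : α) (u : Fin 5 → α) : Matrix.vecCons x u 1 = u 0 := rfl
lemma c6_2 (x : α) (u : Fin 5 → α) : Matrix.vecCons x u 2 = u 1 := rfl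
lemma c6_3 (x : α) (u : Fin 5 → α) : Matrix.vecCons x u 3 = u 2 := rfl
lemma c6_4 (x : α) (u : Fin 5 → α) : Matrix.vecCons x u 4 = u 3 := rfl
lemma c6_5 (x : α) (u : Fin 5 → α) : Matrix.vecCons x u 5 = u 4 := rfl
lemma c5_4 (x : α) (u : Fin 4 → α) : Matrix.vecCons x u 4 = u 3 := rfl
lemma c5_3 (x : α) (u : Fin 4 → α) : Matrix.vecCons x u 3 = u 2 := rfl
lemma c5_2 (x : α) (u : Fin 4 → α) : Matrix.vecCons x u 2 = u 1 := rfl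
lemma c5_1 (x : α) (u : Fin 4 → α) : Matrix.vecCons x u 1 = u 0 := rfl
lemma c4_3 (x : α) (u : Fin 3 → α) : Matrix.vecCons x u 3 = u 2 := rfl
lemma c4_2 (x : α) (u : Fin 3 → α) : Matrix.vecCons x u 2 = u 1 := rfl
lemma c4_1 (x : α) (u : Fin 3 → α) : Matrix.vecCons x u 1 = u 0 := rfl
lemma c3_2 (x : α) (u : Fin 2 → α) : Matrix.vecCons x u 2 = u 1 := rfl
lemma c3_1 (x : α) (u : Fin 2 → α) : Matrix.vecCons x u 1 = u 0 := rfl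
lemma c2_1 (x : α) (u : Fin 1 → α) : Matrix.vecCons x u 1 = u 0 := rfl
end AuxVec

set_option maxHeartbeats 4000000 in
/-- The modular invariant matrix `M` of the exceptional G2 level 3 partition function
commutes with the modular generators `S` and `T`. -/
theorem modular_invariant_G2_level3 (u1 u2 u3 : ℝ)
    (h1 : u1^3 - u1^2 - 2*u1 + 1 = 0)
    (h2 : u2^3 - u2^2 - 2*u2 + 1 = 0)
    (h3 : u3^3 - u3^2 - 2*u3 + 1 = 0)
    (h12 : u1 < u2) (h23 : u2 < u3) :
    M * S u1 u2 u3 = S u1 u2 u3 * M ∧ M * T = T * M := by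
  constructor <;>
  · ext i j
    fin_cases i <;> fin_cases j <;>
      simp [M, S, T, ee, Matrix.mul_apply, Fin.sum_univ_six, Matrix.diagonal,
        Matrix.cons_val_zero, c6_1, c6_2, c6_3, c6_4, c6_5, c5_1, c5_2, c5_3, c5_4,
        c4_1, c4_2, c4_3, c3_1, c3_2, c2_1, Matrix.vecHead, Matrix.vecTail] <;> ring
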